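/- Gamma-Coefficient: for all integers n and k, the function ε ↦ Γ(n+1+ε)/(Γ(k+1+ε)·Γ(n-k+1+ε)) of a real variable ε tends, as ε tends to 0 through nonzero real values, to the limit L, where L = ⌊n choose k⌉ if (n ≥ k ≥ 0) or (k ≥ 0 > n) or (0 > n ≥ k), and L = 0 if (k > n ≥ 0) or (n ≥ 0 > k) or (0 > k > n). (In particular the Gamma-coefficient ⟨n choose k⟩ := lim_{ε→0} Γ(n+1+ε)/(Γ(k+1+ε)Γ(n-k+1+ε)) exists and is always an integer.) -/

import Mathlib

/-- Roman factorial of an integer, as a rational number. -/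
def romanFactorial (n : ℤ) : ℚ :=
  if 0 ≤ n then (n.toNat.factorial : ℚ)
  else (-1 : ℚ) ^ (n + 1) / ((-n - 1).toNat.factorial : ℚ)

/-- Roman coefficient of two integers. -/
def romanCoeff (n k : ℤ) : ℚ :=
  romanFactorial n / (romanFactorial k * romanFactorial (n - k))

/-!
`Γ(m + 1 + ε)` tends to `m!` for `m ≥ 0`, and for `m = -p - 1` it has a simple pole at `ε = 0`
with residue `(-1)^p / p!`; in both cases `ε ^ d(m) Γ(m + 1 + ε) → ⌊m⌉!`, where `d(m) ∈ {0, 1}`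
is the pole order. Hence the Gamma quotient is `ε ^ e` times a function tending to
`⌊n⌉! / (⌊k⌉! ⌊n - k⌉!) = ⌊n choose k⌉`, with `e = d(k) + d(n - k) - d(n)`. As `k + (n - k) = n`,
and a sum is negative only if a summand is, `e ∈ {0, 1}`; and `e = 0` exactly in the three regions
where the limit is nonzero.
-/

open Filter Topology

lemma romanFactorial_natCast (a : ℕ) : romanFactorial a = a.factorial := by
  simp [romanFactorial]

lemma romanFactorial_negSucc (p : ℕ) :
    romanFactorial (Int.negSucc p) = (-1) ^ p / p.factorial := by
  have hp : -Int.negSucc p - 1 = p := by omega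
  have hp' : Int.negSucc p + 1 = -p := by omega
  rw [romanFactorial, if_neg (Int.negSucc_lt_zero p).not_ge, hp, Int.toNat_natCast, hp',
    zpow_neg, zpow_natCast, ← inv_pow, inv_neg, inv_one]

lemma romanFactorial_ne_zero (m : ℤ) : romanFactorial m ≠ 0 := by
  cases m with
  | ofNat a => simpa [romanFactorial_natCast] using a.factorial_ne_zero
  | negSucc p => simp [romanFactorial_negSucc, p.factorial_ne_zero]

namespace Real

lemma tendsto_Gamma_add_nhdsNE {s : ℝ} (hs : 0 < s) :
    Tendsto (fun ε => Gamma (s + ε)) (𝓝[≠] 0) (𝓝 (Gamma s)) := by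
  have hcont : ContinuousAt Gamma s :=
    differentiableOn_Gamma_Ioi.continuousOn.continuousAt (Ioi_mem_nhds hs)
  refine tendsto_nhdsWithin_of_tendsto_nhds (hcont.tendsto.comp ?_)
  simpa using (continuous_const_add s).tendsto 0

lemma tendsto_self_mul_Gamma_sub_nat (p : ℕ) :
    Tendsto (fun ε => ε * Gamma (ε - p)) (𝓝[≠] 0) (𝓝 ((-1) ^ p / p.factorial)) := by
  induction p with
  | zero =>
    have h := tendsto_Gamma_add_nhdsNE one_pos
    simp only [Gamma_one] at h
    refine (h.congr' ?_).trans (by simp)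
    filter_upwards [self_mem_nhdsWithin] with ε (hε : ε ≠ 0)
    rw [add_comm, Gamma_add_one hε, Nat.cast_zero, sub_zero]
  | succ p ih =>
    have hden : Tendsto (fun ε : ℝ => ε - (p + 1)) (𝓝[≠] 0) (𝓝 (-(p + 1))) :=
      tendsto_nhdsWithin_of_tendsto_nhds <| by
        simpa using (continuous_sub_right ((p : ℝ) + 1)).tendsto 0
    have hval : (-1) ^ p / p.factorial / (-(p + 1) : ℝ) = (-1) ^ (p + 1) / (p + 1).factorial := by
      push_cast [Nat.factorial_succ]
      field_simp
      ring
    rw [← hval]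
    refine (ih.div hden (neg_ne_zero.mpr (by positivity))).congr' ?_
    filter_upwards [eventually_nhdsWithin_of_eventually_nhds (eventually_lt_nhds one_pos)]
      with ε hε
    have hne : ε - (p + 1) ≠ 0 := by
      have : (0 : ℝ) ≤ p := p.cast_nonneg
      linarith
    simp only [Pi.div_apply]
    rw [show ε - (p : ℝ) = ε - (p + 1) + 1 by ring, Gamma_add_one hne]
    push_cast
    field_simp

end Real

/-- The order of the pole of `Γ(m + 1 + ε)` at `ε = 0`. -/
def poleOrder (m : ℤ) : ℕ := if m < 0 then 1 else 0

@[simp]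
lemma poleOrder_natCast (a : ℕ) : poleOrder a = 0 := by
  simp [poleOrder]

@[simp]
lemma poleOrder_negSucc (p : ℕ) : poleOrder (Int.negSucc p) = 1 := by
  simp [poleOrder]

lemma tendsto_pow_poleOrder_mul_Gamma (m : ℤ) :
    Tendsto (fun ε : ℝ => ε ^ poleOrder m * Real.Gamma (m + 1 + ε)) (𝓝[≠] 0)
      (𝓝 (romanFactorial m)) := by
  cases m with
  | ofNat a =>
    have h := Real.tendsto_Gamma_add_nhdsNE (s := a + 1) (by positivity)
    simpa [romanFactorial_natCast, Real.Gamma_nat_eq_factorial] using h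
  | negSucc p =>
    have harg : ∀ ε : ℝ, ((Int.negSucc p : ℤ) : ℝ) + 1 + ε = ε - p := fun ε => by
      push_cast [Int.negSucc_eq]
      ring
    simp only [poleOrder_negSucc, pow_one, harg, romanFactorial_negSucc]
    push_cast
    exact Real.tendsto_self_mul_Gamma_sub_nat p

lemma poleOrder_add_le (a b : ℤ) : poleOrder (a + b) ≤ poleOrder a + poleOrder b := by
  unfold poleOrder
  split_ifs <;> omega

lemma poleOrder_add_poleOrder_sub_eq_iff (n k : ℤ) :
    poleOrder k + poleOrder (n - k) = poleOrder n ↔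
      (n ≥ k ∧ k ≥ 0) ∨ (k ≥ 0 ∧ 0 > n) ∨ (0 > n ∧ n ≥ k) := by
  unfold poleOrder
  constructor
  · intro h
    split_ifs at h <;> omega
  · rintro (h | h | h) <;> split_ifs <;> omega

/-- The Gamma-coefficient limit exists: as `ε → 0` through nonzero values,
`Γ(n+1+ε)/(Γ(k+1+ε)Γ(n-k+1+ε))` tends to `⌊n choose k⌉` in regions 1, 2 and 3,
and to `0` in regions 4, 5 and 6. -/
theorem gammaCoeff_tendsto (n k : ℤ) :
    Filter.Tendsto
      (fun ε : ℝ =>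
        Real.Gamma ((n : ℝ) + 1 + ε) /
          (Real.Gamma ((k : ℝ) + 1 + ε) * Real.Gamma (((n - k : ℤ) : ℝ) + 1 + ε)))
      (nhdsWithin 0 {0}ᶜ)
      (nhds (if (n ≥ k ∧ k ≥ 0) ∨ (k ≥ 0 ∧ 0 > n) ∨ (0 > n ∧ n ≥ k) then
        (romanCoeff n k : ℝ) else 0)) := by
  obtain ⟨e, he⟩ : ∃ e, poleOrder k + poleOrder (n - k) = e + poleOrder n :=
    Nat.exists_eq_add_of_le' (by simpa using poleOrder_add_le k (n - k))
  have hlim := ((continuous_pow e).tendsto' (0 : ℝ) _ rfl).mono_left nhdsWithin_le_nhds |>.mul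
    ((tendsto_pow_poleOrder_mul_Gamma n).div
      ((tendsto_pow_poleOrder_mul_Gamma k).mul (tendsto_pow_poleOrder_mul_Gamma (n - k)))
      (by exact_mod_cast mul_ne_zero (romanFactorial_ne_zero k) (romanFactorial_ne_zero _)))
  have hval : (0 : ℝ) ^ e * (romanFactorial n / (romanFactorial k * romanFactorial (n - k)))
      = if (n ≥ k ∧ k ≥ 0) ∨ (k ≥ 0 ∧ 0 > n) ∨ (0 > n ∧ n ≥ k) then
          (romanCoeff n k : ℝ) else 0 := by
    have hcond : ((n ≥ k ∧ k ≥ 0) ∨ (k ≥ 0 ∧ 0 > n) ∨ (0 > n ∧ n ≥ k)) ↔ e = 0 := by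
      rw [← poleOrder_add_poleOrder_sub_eq_iff, he, add_eq_right]
    by_cases h : e = 0 <;> simp [h, hcond, romanCoeff]
  rw [← hval]
  refine hlim.congr' ?_
  filter_upwards [self_mem_nhdsWithin] with ε (hε : ε ≠ 0)
  simp only [Pi.div_apply]
  rw [mul_mul_mul_comm, ← pow_add, he, pow_add, ← mul_div_assoc, mul_assoc (ε ^ e),
    mul_div_mul_left _ _ (pow_ne_zero _ hε), mul_div_mul_left _ _ (pow_ne_zero _ hε)]
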